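/- arXiv:1110.4921 — 2 statements merged into one kernel-verified Lean document; each statement's English description precedes it below -/
import Mathlib

section
/- Let G be a residually finite group and let A be a finite set. If X ⊆ A^G is a strongly irreducible subshift of finite type containing a periodic configuration, then the automorphism group Aut(X), consisting of all bijective cellular automata τ : X → X under composition, is residually finite. -/
/-- The shift action of a group `G` on configurations `x : G → A`:
`(g • x)(h) = x(g⁻¹h)`. -/
def shift {G A : Type*} [Group G] (g : G) (x : G → A) : G → A :=
  fun h => x (g⁻¹ * h)

/-- A subshift is a closed, shift-invariant subset of `A^G` (with the prodiscrete topology). -/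
def IsSubshift {G A : Type*} [Group G] [TopologicalSpace A] (X : Set (G → A)) : Prop :=
  IsClosed X ∧ ∀ (g : G) (x : G → A), x ∈ X → shift g x ∈ X

/-- A configuration is periodic if its orbit under the shift action is finite. -/
def IsPeriodicConfig {G A : Type*} [Group G] (x : G → A) : Prop :=
  (Set.range fun g : G => shift g x).Finite

/-- A subshift is of finite type if it is defined by a finite window `Ω` and a set of
allowed patterns `P ⊆ A^Ω`. -/
def IsOfFiniteType {G A : Type*} [Group G] (X : Set (G → A)) : Prop :=
  ∃ (Ω : Finset G) (P : Set ({g : G // g ∈ Ω} → A)),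
    X = {x : G → A | ∀ g : G, (fun w : {g : G // g ∈ Ω} => shift g x w.1) ∈ P}

/-- A subshift is strongly irreducible if there is a finite `Δ ⊆ G` such that any two
patterns of configurations of `X` with supports `Ω₁, Ω₂` satisfying `Ω₁Δ⁻¹ ∩ Ω₂ = ∅`
can be glued inside `X`. -/
def IsStronglyIrreducible {G A : Type*} [Group G] (X : Set (G → A)) : Prop :=
  ∃ Δ : Finset G, ∀ Ω₁ Ω₂ : Finset G,
    (∀ a ∈ Ω₁, ∀ d ∈ Δ, a * d⁻¹ ∉ Ω₂) →
    ∀ x₁ ∈ X, ∀ x₂ ∈ X, ∃ x ∈ X,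
      (∀ w ∈ Ω₁, x w = x₁ w) ∧ (∀ w ∈ Ω₂, x w = x₂ w)

/-- A group is residually finite if the intersection of its finite-index subgroups is
trivial, i.e. every nontrivial element avoids some finite-index subgroup. -/
def ResiduallyFinite (H : Type*) [Group H] : Prop :=
  ∀ h : H, h ≠ 1 → ∃ K : Subgroup H, K.FiniteIndex ∧ h ∉ K

/-- An automorphism of a subshift `X ⊆ A^G`: a bijective self-map of `X` that is
continuous (in the prodiscrete topology) with continuous inverse and is
`G`-equivariant (together with its inverse) with respect to the shift action.
(For a subshift, a bijective continuous equivariant map automatically has continuous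
equivariant inverse, by compactness and shift-invariance.) -/
structure ShiftAut {G A : Type*} [Group G] [TopologicalSpace A] (X : Set (G → A)) where
  toEquiv : {x : G → A // x ∈ X} ≃ {x : G → A // x ∈ X}
  continuous_toFun : Continuous fun x : {x : G → A // x ∈ X} => (toEquiv x : G → A)
  continuous_invFun : Continuous fun x : {x : G → A // x ∈ X} => (toEquiv.symm x : G → A)
  equivariant : ∀ (g : G) (x y : {x : G → A // x ∈ X}),
    (y : G → A) = shift g (x : G → A) → (toEquiv y : G → A) = shift g (toEquiv x : G → A)
  equivariant_symm : ∀ (g : G) (x y : {x : G → A // x ∈ X}),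
    (y : G → A) = shift g (x : G → A) →
      (toEquiv.symm y : G → A) = shift g (toEquiv.symm x : G → A)

theorem ShiftAut.ext' {G A : Type*} [Group G] [TopologicalSpace A] {X : Set (G → A)}
    {f g : ShiftAut X} (h : f.toEquiv = g.toEquiv) : f = g := by
  cases f; cases g; cases h; rfl

/-- The automorphism group `Aut(X)` of a subshift, under composition. -/
instance ShiftAut.instGroup {G A : Type*} [Group G] [TopologicalSpace A]
    (X : Set (G → A)) : Group (ShiftAut X) where
  mul f₁ f₂ :=
    { toEquiv := f₂.toEquiv.trans f₁.toEquiv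
      continuous_toFun := by
        have h2 : Continuous fun x : {x : G → A // x ∈ X} => f₂.toEquiv x :=
          f₂.continuous_toFun.subtype_mk fun x => (f₂.toEquiv x).2
        exact f₁.continuous_toFun.comp h2
      continuous_invFun := by
        have h1 : Continuous fun x : {x : G → A // x ∈ X} => f₁.toEquiv.symm x :=
          f₁.continuous_invFun.subtype_mk fun x => (f₁.toEquiv.symm x).2
        exact f₂.continuous_invFun.comp h1
      equivariant := fun g x y h => f₁.equivariant g _ _ (f₂.equivariant g x y h)
      equivariant_symm := fun g x y h =>
        f₂.equivariant_symm g _ _ (f₁.equivariant_symm g x y h) }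
  one :=
    { toEquiv := Equiv.refl _
      continuous_toFun := continuous_subtype_val
      continuous_invFun := continuous_subtype_val
      equivariant := fun _ _ _ h => h
      equivariant_symm := fun _ _ _ h => h }
  inv f :=
    { toEquiv := f.toEquiv.symm
      continuous_toFun := f.continuous_invFun
      continuous_invFun := f.continuous_toFun
      equivariant := f.equivariant_symm
      equivariant_symm := f.equivariant }
  mul_assoc a b c := ShiftAut.ext' (Equiv.ext fun _ => rfl)
  one_mul a := ShiftAut.ext' (Equiv.ext fun _ => rfl)
  mul_one a := ShiftAut.ext' (Equiv.ext fun _ => rfl)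
  inv_mul_cancel a := ShiftAut.ext' (Equiv.ext fun x => a.toEquiv.symm_apply_apply x)

/-!
Periodic points are dense in `X`: glue a pattern of `x` into a periodic point `p` (strong
irreducibility, extended to infinite supports by compactness), then repeat the glued patch
along a finite-index subgroup `K ≤ Stab(p)` whose translates of the patch lie so far apart
that every window of the finite-type constraint meets at most one of them (residual
finiteness of `G`). For finite-index `K`, the `K`-invariant points of `X` form a finite set
permuted by `Aut(X)`; a nontrivial automorphism, being continuous, moves some periodic
point, hence acts nontrivially on one of these finite sets.
-/

open Pointwise Set

section Shift

variable {G A : Type*} [Group G]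

theorem shift_shift (g h : G) (x : G → A) : shift g (shift h x) = shift (g * h) x := by
  funext k; simp [shift, mul_assoc]

theorem shift_one (x : G → A) : shift (1 : G) x = x := by
  funext k; simp [shift]

def shiftStabilizer (x : G → A) : Subgroup G where
  carrier := {g | shift g x = x}
  one_mem' := shift_one x
  mul_mem' {g h} (hg : shift g x = x) (hh : shift h x = x) := by
    change shift (g * h) x = x
    rw [← shift_shift, hh, hg]
  inv_mem' {g} (hg : shift g x = x) := by
    change shift g⁻¹ x = x
    conv_lhs => rw [← hg]
    rw [shift_shift, inv_mul_cancel, shift_one]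

theorem mem_shiftStabilizer {x : G → A} {g : G} : g ∈ shiftStabilizer x ↔ shift g x = x :=
  Iff.rfl

theorem apply_inv_mul_of_mem_shiftStabilizer {x : G → A} {k : G}
    (hk : k ∈ shiftStabilizer x) (g : G) : x (k⁻¹ * g) = x g :=
  congrFun hk g

theorem isPeriodicConfig_iff_finiteIndex {x : G → A} :
    IsPeriodicConfig x ↔ (shiftStabilizer x).FiniteIndex := by
  constructor
  · intro hx
    have : Finite (range fun g : G => shift g x) := hx.to_subtype
    have : Finite (G ⧸ shiftStabilizer x) := by
      refine Finite.of_injective (fun q : G ⧸ shiftStabilizer x =>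
        (⟨_, mem_range_self q.out⟩ : range fun g : G => shift g x)) fun q₁ q₂ h => ?_
      rw [← QuotientGroup.out_eq' q₁, ← QuotientGroup.out_eq' q₂, QuotientGroup.eq,
        mem_shiftStabilizer, ← shift_shift, ← Subtype.mk.inj h, shift_shift, inv_mul_cancel,
        shift_one]
    exact Subgroup.finiteIndex_of_finite_quotient
  · intro hx
    refine (finite_range fun q : G ⧸ shiftStabilizer x => shift q.out x).subset ?_
    rintro - ⟨g, rfl⟩
    obtain ⟨k, hk⟩ := QuotientGroup.mk_out_eq_mul (shiftStabilizer x) g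
    exact ⟨g, show shift _ x = shift g x by rw [hk, ← shift_shift, k.2]⟩

/-- A `K`-invariant configuration is determined by its values on the representatives
`(g⁻¹K).out⁻¹` of the right cosets `Kg`. -/
theorem finite_le_shiftStabilizer [Finite A] (X : Set (G → A)) (K : Subgroup G)
    [K.FiniteIndex] : Finite {x : X // K ≤ shiftStabilizer (x : G → A)} := by
  have : Finite (G ⧸ K) := Subgroup.finite_quotient_of_finiteIndex
  have hrep : ∀ (x : {x : X // K ≤ shiftStabilizer (x : G → A)}) (g : G),
      (x.1 : G → A) ((g⁻¹ : G) : G ⧸ K).out⁻¹ = (x.1 : G → A) g := by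
    intro x g
    obtain ⟨k, hk⟩ := QuotientGroup.mk_out_eq_mul K g⁻¹
    rw [hk, mul_inv_rev, inv_inv]
    exact apply_inv_mul_of_mem_shiftStabilizer (x.2 k.2) g
  refine Finite.of_injective (fun x q => (x.1 : G → A) (q.out⁻¹ : G) : _ → G ⧸ K → A)
    fun x y h => Subtype.ext <| Subtype.ext <| funext fun g => ?_
  rw [← hrep x, ← hrep y]
  exact congrFun h _

end Shift

theorem ResiduallyFinite.exists_finiteIndex_le_avoid {G : Type*} [Group G]
    (hG : ResiduallyFinite G) (H : Subgroup G) [H.FiniteIndex] {E : Set G} (hE : E.Finite) :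
    ∃ K ≤ H, K.FiniteIndex ∧ ∀ k ∈ K, k ∈ E → k = 1 := by
  choose L hLfi hL using hG
  have : Finite {e // e ∈ E ∧ e ≠ 1} := (hE.subset fun _ he => he.1).to_subtype
  have : (⨅ e : {e // e ∈ E ∧ e ≠ 1}, L e e.2.2).FiniteIndex :=
    Subgroup.finiteIndex_iInf fun e => hLfi _ _
  refine ⟨H ⊓ ⨅ e : {e // e ∈ E ∧ e ≠ 1}, L e e.2.2, inf_le_left, inferInstance, ?_⟩
  intro k hk hkE
  by_contra hk1
  exact hL k hk1 (Subgroup.mem_iInf.mp (Subgroup.mem_inf.mp hk).2 ⟨k, hkE, hk1⟩)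

section Subshift

variable {G A : Type*} [Group G] {X : Set (G → A)}

def IsStronglyIrreducibleWith (X : Set (G → A)) (Δ : Finset G) : Prop :=
  ∀ Ω₁ Ω₂ : Finset G, (∀ a ∈ Ω₁, ∀ d ∈ Δ, a * d⁻¹ ∉ Ω₂) →
    ∀ x₁ ∈ X, ∀ x₂ ∈ X, ∃ x ∈ X, (∀ w ∈ Ω₁, x w = x₁ w) ∧ (∀ w ∈ Ω₂, x w = x₂ w)

/-- By compactness of `A^G`, gluing works with an arbitrary second support `Ω₂`. -/
theorem IsStronglyIrreducibleWith.exists_eqOn_eqOn [Finite A] [TopologicalSpace A]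
    [DiscreteTopology A] {Δ : Finset G} (hΔ : IsStronglyIrreducibleWith X Δ)
    (hX : IsClosed X) (Ω₁ : Finset G) {Ω₂ : Set G} (hsep : ∀ a ∈ Ω₁, ∀ d ∈ Δ, a * d⁻¹ ∉ Ω₂)
    {x₁ x₂ : G → A} (hx₁ : x₁ ∈ X) (hx₂ : x₂ ∈ X) :
    ∃ x ∈ X, EqOn x x₁ Ω₁ ∧ EqOn x x₂ Ω₂ := by
  have hclosed : ∀ (w : G) (c : A), IsClosed {x : G → A | x w = c} := fun w c =>
    isClosed_eq (continuous_apply w) continuous_const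
  have hcompact : IsCompact (X ∩ ⋂ w ∈ Ω₁, {x | x w = x₁ w}) :=
    (hX.inter (isClosed_biInter fun w _ => hclosed w _)).isCompact
  obtain ⟨x, ⟨hxX, hx₁⟩, hx₂⟩ := hcompact.inter_iInter_nonempty
    (fun w : Ω₂ => {x : G → A | x w = x₂ w}) (fun w => hclosed w _) fun u => by
      obtain ⟨x, hxX, hx₁, hx₂⟩ := hΔ Ω₁ (u.map (Function.Embedding.subtype _))
        (fun a ha d hd h => by
          obtain ⟨w, -, hw⟩ := Finset.mem_map.mp h
          exact hsep a ha d hd (hw ▸ w.2))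
        x₁ hx₁ x₂ hx₂
      refine ⟨x, ⟨hxX, mem_iInter₂.mpr hx₁⟩, mem_iInter₂.mpr fun w hw => ?_⟩
      exact hx₂ w (Finset.mem_map_of_mem _ hw)
  exact ⟨x, hxX, fun w hw => mem_iInter₂.mp hx₁ w hw,
    fun w hw => mem_iInter.mp hx₂ ⟨w, hw⟩⟩

theorem IsOfFiniteType.exists_window (hX : IsOfFiniteType X) :
    ∃ W : Finset G, ∀ y : G → A,
      (∀ g, ∃ c ∈ X, ∀ w ∈ W, y (g * w) = c (g * w)) → y ∈ X := by
  obtain ⟨W, P, rfl⟩ := hX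
  refine ⟨W, fun y hy g => ?_⟩
  obtain ⟨c, hc, hyc⟩ := hy g⁻¹
  convert hc g using 1
  funext w
  exact hyc w w.2

end Subshift

section Periodize

variable {G A : Type*} [Group G] (K : Subgroup G) (S : Set G)

open scoped Classical in
/-- Copies of the pattern `z|_S` placed on the translates `kS` (`k ∈ K`), with background
`p` elsewhere. -/
noncomputable def periodize (z p : G → A) : G → A := fun g =>
  if h : ∃ k ∈ K, k⁻¹ * g ∈ S then z (h.choose⁻¹ * g) else p g

variable {K S} {z p : G → A}

theorem periodize_apply (hp : K ≤ shiftStabilizer p) (hzp : ∀ g ∉ S, z g = p g)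
    {k : G} (hk : k ∈ K) {g : G} (hiso : ∀ k' ∈ K, k' ≠ k → k'⁻¹ * g ∉ S) :
    periodize K S z p g = z (k⁻¹ * g) := by
  unfold periodize
  split_ifs with h
  · by_cases hchoose : h.choose = k
    · rw [hchoose]
    · exact absurd h.choose_spec.2 (hiso _ h.choose_spec.1 hchoose)
  · push Not at h
    rw [hzp _ (h k hk), apply_inv_mul_of_mem_shiftStabilizer (hp hk)]

/-- Two translates `kS`, `k'S` meeting `gB` force `k⁻¹k' ∈ (SB⁻¹)(SB⁻¹)⁻¹`. -/
theorem exists_translate_isolating {B : Set G}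
    (hK : ∀ k ∈ K, k ∈ (S * B⁻¹) * (S * B⁻¹)⁻¹ → k = 1) (g : G) :
    ∃ k ∈ K, ∀ k' ∈ K, k' ≠ k → ∀ b ∈ B, k'⁻¹ * (g * b) ∉ S := by
  by_cases h : ∃ k ∈ K, ∃ b ∈ B, k⁻¹ * (g * b) ∈ S
  · obtain ⟨k, hk, b, hb, hkb⟩ := h
    refine ⟨k, hk, fun k' hk' hne b' hb' hkb' => hne ?_⟩
    have hmem : k⁻¹ * k' ∈ (S * B⁻¹) * (S * B⁻¹)⁻¹ := by
      have : k⁻¹ * k' = (k⁻¹ * (g * b) * b⁻¹) * (k'⁻¹ * (g * b') * b'⁻¹)⁻¹ := by group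
      rw [this]
      exact mul_mem_mul (mul_mem_mul hkb (inv_mem_inv.mpr hb))
        (inv_mem_inv.mpr (mul_mem_mul hkb' (inv_mem_inv.mpr hb')))
    exact (inv_mul_eq_one.mp (hK _ (mul_mem (inv_mem hk) hk') hmem)).symm
  · push Not at h
    exact ⟨1, one_mem K, fun k' hk' _ b hb => h k' hk' b hb⟩

theorem le_shiftStabilizer_periodize (hp : K ≤ shiftStabilizer p) (hzp : ∀ g ∉ S, z g = p g)
    (hiso : ∀ g, ∃ k ∈ K, ∀ k' ∈ K, k' ≠ k → k'⁻¹ * g ∉ S) :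
    K ≤ shiftStabilizer (periodize K S z p) := by
  intro h hh
  funext g
  obtain ⟨k, hk, hkg⟩ := hiso g
  have hiso' : ∀ k' ∈ K, k' ≠ h⁻¹ * k → k'⁻¹ * (h⁻¹ * g) ∉ S := fun k' hk' hne => by
    rw [← mul_assoc, ← mul_inv_rev]
    exact hkg _ (mul_mem hh hk') fun he => hne (by rw [← he, inv_mul_cancel_left])
  change periodize K S z p (h⁻¹ * g) = _
  rw [periodize_apply hp hzp (mul_mem (inv_mem hh) hk) hiso', periodize_apply hp hzp hk hkg,
    mul_inv_rev, inv_inv, mul_assoc, mul_inv_cancel_left]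

end Periodize

theorem exists_isPeriodicConfig_eqOn {G A : Type*} [Group G] [Finite A] [TopologicalSpace A]
    [DiscreteTopology A] (hG : ResiduallyFinite G) {X : Set (G → A)} (hX : IsSubshift X)
    (hft : IsOfFiniteType X) (hsi : IsStronglyIrreducible X)
    (hper : ∃ p ∈ X, IsPeriodicConfig p) {x : G → A} (hx : x ∈ X) (Ω : Finset G) :
    ∃ y ∈ X, IsPeriodicConfig y ∧ EqOn y x Ω := by
  obtain ⟨Δ, hΔ⟩ : ∃ Δ, IsStronglyIrreducibleWith X Δ := hsi
  obtain ⟨p, hpX, hp⟩ := hper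
  obtain ⟨W, hW⟩ := hft.exists_window
  obtain ⟨z, hzX, hzx, hzp⟩ :=
    hΔ.exists_eqOn_eqOn hX.1 Ω (Ω₂ := ((Ω : Set G) * (Δ : Set G)⁻¹)ᶜ)
      (fun a ha d hd h => h (mul_mem_mul ha (inv_mem_inv.mpr hd))) hx hpX
  set S : Set G := Ω ∪ (Ω : Set G) * (Δ : Set G)⁻¹
  -- `1 ∈ B` makes the translates `kS` pairwise disjoint, not only separated by windows.
  set B : Set G := insert 1 W
  have hSfin : S.Finite := Ω.finite_toSet.union (Ω.finite_toSet.mul Δ.finite_toSet.inv)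
  have hSB : (S * B⁻¹).Finite := hSfin.mul (W.finite_toSet.insert 1).inv
  have : (shiftStabilizer p).FiniteIndex := isPeriodicConfig_iff_finiteIndex.mp hp
  obtain ⟨K, hKp, hKfi, hKE⟩ :=
    hG.exists_finiteIndex_le_avoid (shiftStabilizer p) (hSB.mul hSB.inv)
  have hiso := exists_translate_isolating hKE
  have hzS : ∀ g ∉ S, z g = p g := fun g hg => hzp fun h => hg (Or.inr h)
  have hisoPt : ∀ g, ∃ k ∈ K, ∀ k' ∈ K, k' ≠ k → k'⁻¹ * g ∉ S := fun g => by
    obtain ⟨k, hk, hkg⟩ := hiso g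
    exact ⟨k, hk, fun k' hk' hne => by simpa using hkg k' hk' hne 1 (mem_insert 1 _)⟩
  refine ⟨periodize K S z p, hW _ fun g => ?_, ?_, fun w hw => ?_⟩
  · obtain ⟨k, hk, hkg⟩ := hiso g
    refine ⟨shift k z, hX.2 k z hzX, fun w hw => ?_⟩
    exact periodize_apply hKp hzS hk fun k' hk' hne =>
      hkg k' hk' hne w (mem_insert_of_mem _ hw)
  · exact isPeriodicConfig_iff_finiteIndex.mpr
      (Subgroup.finiteIndex_of_le (le_shiftStabilizer_periodize hKp hzS hisoPt))
  · obtain ⟨k, hk, hkw⟩ := hisoPt w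
    have hk1 : k = 1 := by
      by_contra hne
      exact hkw 1 (one_mem K) (Ne.symm hne) (by rw [inv_one, one_mul]; exact Or.inl hw)
    rw [periodize_apply hKp hzS hk hkw, hk1, inv_one, one_mul, hzx hw]

theorem Continuous.exists_finset_eqOn_imp_eq {G A B : Type*} [TopologicalSpace A]
    [DiscreteTopology A] [TopologicalSpace B] [DiscreteTopology B] {X : Set (G → A)}
    {f : X → B} (hf : Continuous f) (x : X) :
    ∃ I : Finset G, ∀ y : X, EqOn (y : G → A) x I → f y = f x := by
  have hx : f ⁻¹' {f x} ∈ nhds x := hf.continuousAt.preimage_mem_nhds (by simp)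
  obtain ⟨V, hV, hVx⟩ := (mem_nhds_subtype X x _).mp hx
  rw [nhds_pi, Filter.mem_pi'] at hV
  obtain ⟨I, t, ht, hIt⟩ := hV
  refine ⟨I, fun y hy => hVx (hIt fun i hi => ?_)⟩
  rw [hy hi]
  exact mem_of_mem_nhds (ht i)

namespace ShiftAut

variable {G A : Type*} [Group G] [TopologicalSpace A] {X : Set (G → A)}

theorem le_shiftStabilizer_apply (τ : ShiftAut X) {K : Subgroup G} {x : X}
    (hx : K ≤ shiftStabilizer (x : G → A)) : K ≤ shiftStabilizer (τ.toEquiv x : G → A) :=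
  fun k hk => (τ.equivariant k x x (hx hk).symm).symm

def permFixed (K : Subgroup G) :
    ShiftAut X →* Equiv.Perm {x : X // K ≤ shiftStabilizer (x : G → A)} where
  toFun τ := τ.toEquiv.subtypeEquiv fun x =>
    ⟨τ.le_shiftStabilizer_apply, fun h =>
      τ.toEquiv.symm_apply_apply x ▸ τ⁻¹.le_shiftStabilizer_apply h⟩
  map_one' := rfl
  map_mul' _ _ := rfl

theorem exists_isPeriodicConfig_apply_ne [DiscreteTopology A]
    (hdense : ∀ x ∈ X, ∀ Ω : Finset G, ∃ y ∈ X, IsPeriodicConfig y ∧ EqOn y x Ω)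
    {τ : ShiftAut X} (hτ : τ ≠ 1) :
    ∃ y : X, IsPeriodicConfig (y : G → A) ∧ τ.toEquiv y ≠ y := by
  classical
  obtain ⟨x, hx⟩ : ∃ x, τ.toEquiv x ≠ x := by
    by_contra! h
    exact hτ (ShiftAut.ext' (Equiv.ext h))
  obtain ⟨g, hg⟩ : ∃ g, (τ.toEquiv x : G → A) g ≠ (x : G → A) g := by
    by_contra! h
    exact hx (Subtype.ext (funext h))
  obtain ⟨I, hI⟩ :=
    ((continuous_apply g).comp τ.continuous_toFun).exists_finset_eqOn_imp_eq x
  obtain ⟨y, hyX, hy, hyx⟩ := hdense x x.2 (insert g I)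
  refine ⟨⟨y, hyX⟩, hy, fun h => hg ?_⟩
  have hτy : (τ.toEquiv ⟨y, hyX⟩ : G → A) g = (τ.toEquiv x : G → A) g :=
    hI ⟨y, hyX⟩ fun i hi => hyx (Finset.mem_insert_of_mem hi)
  rw [← hτy, h]
  exact hyx (Finset.mem_insert_self g I)

end ShiftAut

/-- If `G` is residually finite, `A` a finite set and `X ⊆ A^G` a strongly irreducible
subshift of finite type containing a periodic configuration, then the automorphism
group `Aut(X)` of `X` is residually finite. -/
theorem aut_residually_finite
    {G A : Type*} [Group G] [Finite A] [TopologicalSpace A] [DiscreteTopology A]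
    (hG : ResiduallyFinite G) (X : Set (G → A))
    (hX : IsSubshift X) (hft : IsOfFiniteType X) (hsi : IsStronglyIrreducible X)
    (hper : ∃ x ∈ X, IsPeriodicConfig x) :
    ResiduallyFinite (ShiftAut X) := by
  intro τ hτ
  obtain ⟨y, hy, hτy⟩ := ShiftAut.exists_isPeriodicConfig_apply_ne
    (fun x hx Ω => exists_isPeriodicConfig_eqOn hG hX hft hsi hper hx Ω) hτ
  set K := shiftStabilizer (y : G → A)
  have : K.FiniteIndex := isPeriodicConfig_iff_finiteIndex.mp hy
  have := finite_le_shiftStabilizer X K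
  refine ⟨(ShiftAut.permFixed K).ker, Subgroup.finiteIndex_ker _, fun hker => hτy ?_⟩
  exact congrArg Subtype.val (Equiv.ext_iff.mp (MonoidHom.mem_ker.mp hker) ⟨y, le_rfl⟩)
end

section
/- Let G be a group, A a finite set, and X ⊆ A^G a subshift in which the set of periodic configurations is dense. If the shift action of G on X is faithful (i.e., for every g ≠ 1 in G there exists x ∈ X with g·x ≠ x), then G is residually finite. -/
/-!
By orbit–stabilizer, a periodic configuration has a finite-index stabilizer. Given `g ≠ 1`,
faithfulness gives `x ∈ X` not fixed by `g`; configurations not fixed by `g` form an open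
set, so by density one of them, `y`, is periodic, and `g` avoids the stabilizer of `y`.
-/

section Shift

variable {G A : Type*} [Group G]

-- The action of `G` on `G → A` induced by left multiplication is the shift, by `rfl`.
attribute [local instance] arrowAction

theorem IsPeriodicConfig.finiteIndex_stabilizer {x : G → A} (hx : IsPeriodicConfig x) :
    (MulAction.stabilizer G x).FiniteIndex := by
  have : Finite (MulAction.orbit G x) := hx.to_subtype
  have : Finite (G ⧸ MulAction.stabilizer G x) :=
    .of_equiv _ (MulAction.orbitEquivQuotientStabilizer G x)
  exact Subgroup.finiteIndex_of_finite_quotient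

theorem continuous_shift [TopologicalSpace A] (g : G) : Continuous (shift (A := A) g) :=
  continuous_pi fun _ => continuous_apply _

theorem exists_mem_shift_ne_of_mem_closure [TopologicalSpace A] [T2Space A]
    {S : Set (G → A)} {x : G → A} (hx : x ∈ closure S) {g : G} (hgx : shift g x ≠ x) :
    ∃ y ∈ S, shift g y ≠ y := by
  obtain ⟨y, hgy, hyS⟩ :=
    mem_closure_iff.1 hx _ (isOpen_ne_fun (continuous_shift g) continuous_id) hgx
  exact ⟨y, hyS, hgy⟩

end Shift

theorem residually_finite_of_faithful_dense_periodic_general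
    {G A : Type*} [Group G] [TopologicalSpace A] [DiscreteTopology A]
    (X : Set (G → A))
    (hdense : X ⊆ closure {x ∈ X | IsPeriodicConfig x})
    (hfaithful : ∀ g : G, g ≠ 1 → ∃ x ∈ X, shift g x ≠ x) :
    ResiduallyFinite G := by
  intro g hg
  obtain ⟨x, hxX, hgx⟩ := hfaithful g hg
  obtain ⟨y, ⟨-, hy⟩, hgy⟩ := exists_mem_shift_ne_of_mem_closure (hdense hxX) hgx
  let := arrowAction (G := G) (A := G) (B := A)
  exact ⟨MulAction.stabilizer G y, hy.finiteIndex_stabilizer, hgy⟩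

/-- If `X ⊆ A^G` is a subshift with dense periodic configurations and the shift action
of `G` on `X` is faithful, then `G` is residually finite. -/
theorem residually_finite_of_faithful_dense_periodic
    {G A : Type*} [Group G] [Finite A] [TopologicalSpace A] [DiscreteTopology A]
    (X : Set (G → A)) (hX : IsSubshift X)
    (hdense : X ⊆ closure {x ∈ X | IsPeriodicConfig x})
    (hfaithful : ∀ g : G, g ≠ 1 → ∃ x ∈ X, shift g x ≠ x) :
    ResiduallyFinite G :=
  residually_finite_of_faithful_dense_periodic_general X hdense hfaithful
end
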